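/- In the Trimmed Graphical Lasso deterministic setting, under hypotheses (H1)–(H4) and assuming the off-diagonal support S of Θ* satisfies |S| ≤ k, the following master inequality holds: κ‖Δ̃‖_F² ≤ (3λ/2)·Σ_{(i,j)∈S}|Δ̃_{ij}| + (λ/2)·Σ_{i=1}^p |Δ̃_{ii}| − (λ/2)·Σ_{(i,j)∉S, i≠j}|Δ̃_{ij}| + τ1‖Δ̃‖_F. (Display (17) in the proof of Theorem 1.) -/

import Mathlib

/-!
Write `Δ = Θ̃ - Θ*`, `Σ̃` and `Σ*` for the two weighted sample covariances. Splitting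
`Θ*⁻¹ - Θ̃⁻¹ = (Σ̃ - Θ̃⁻¹) - (Σ̃ - Σ*) - (Σ* - Θ*⁻¹)`, stationarity (H1), incoherence (H3) and the
Hölder bound `⟨U, Δ⟩ ≤ ‖U‖_∞ ‖Δ‖₁` with (H4) bound `⟨Θ*⁻¹ - Θ̃⁻¹, Δ⟩` by the right-hand side of the
master inequality, once `‖Θ*‖_{1,off} - ‖Θ̃‖_{1,off}` is estimated by decomposability over `S`.

Restricted strong convexity (H2) only holds on the Frobenius unit ball, so we first localise. If
`‖Δ‖_F > 1`, apply (H2) at the point `Θ* + Δ / ‖Δ‖_F` of the segment `[Θ*, Θ̃]` and use the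
monotonicity `⟨A⁻¹ - B⁻¹, B - A⟩ ≥ 0` of the matrix inverse for the rest of the segment: this gives
`⟨Θ*⁻¹ - Θ̃⁻¹, Δ⟩ ≥ κ ‖Δ‖_F`. The upper bound is at most `3λR + τ₁ ‖Δ‖_F ≤ κ - τ₁ + τ₁ ‖Δ‖_F`
by (H4), a contradiction. Inside the ball, (H2) applies to `Δ` itself.
-/

open Matrix

/-- Trace inner product ⟨U,V⟩ = tr(U Vᵀ). -/
noncomputable def traceInner {p : ℕ} (U V : Matrix (Fin p) (Fin p) ℝ) : ℝ :=
  (U * Vᵀ).trace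

/-- Frobenius norm. -/
noncomputable def frobNorm {p : ℕ} (U : Matrix (Fin p) (Fin p) ℝ) : ℝ :=
  Real.sqrt (∑ i, ∑ j, (U i j) ^ 2)

/-- Entrywise ℓ1 norm: ‖U‖₁ = Σ_{i,j} |U_{ij}|. -/
noncomputable def l1Norm {p : ℕ} (U : Matrix (Fin p) (Fin p) ℝ) : ℝ :=
  ∑ i, ∑ j, |U i j|

/-- Off-diagonal entrywise ℓ1 norm: ‖U‖_{1,off} = Σ_{i≠j} |U_{ij}|. -/
noncomputable def offNorm {p : ℕ} (U : Matrix (Fin p) (Fin p) ℝ) : ℝ :=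
  ∑ ij ∈ Finset.univ.filter (fun ij : Fin p × Fin p => ij.1 ≠ ij.2), |U ij.1 ij.2|

/-- Entrywise sup norm: ‖U‖_∞ = max_{i,j} |U_{ij}|. -/
noncomputable def linfNorm {p : ℕ} (U : Matrix (Fin p) (Fin p) ℝ) : ℝ :=
  ⨆ ij : Fin p × Fin p, |U ij.1 ij.2|

lemma transpose_eq_self_of_isHermitian {ι : Type*} {A : Matrix ι ι ℝ} (hA : A.IsHermitian) :
    Aᵀ = A := by
  rwa [IsHermitian, conjTranspose_eq_transpose_of_trivial] at hA

section
variable {p : ℕ}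

lemma traceInner_eq_sum (U V : Matrix (Fin p) (Fin p) ℝ) :
    traceInner U V = ∑ i, ∑ j, U i j * V i j := by
  simp [traceInner, Matrix.trace, Matrix.mul_apply]

lemma traceInner_sub_left (U V W : Matrix (Fin p) (Fin p) ℝ) :
    traceInner (U - V) W = traceInner U W - traceInner V W := by
  simp only [traceInner, Matrix.sub_mul, trace_sub]

lemma traceInner_add_left (U V W : Matrix (Fin p) (Fin p) ℝ) :
    traceInner (U + V) W = traceInner U W + traceInner V W := by
  simp only [traceInner, Matrix.add_mul, trace_add]

lemma traceInner_smul_right (U V : Matrix (Fin p) (Fin p) ℝ) (c : ℝ) :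
    traceInner U (c • V) = c * traceInner U V := by
  simp only [traceInner, transpose_smul, Matrix.mul_smul, trace_smul, smul_eq_mul]

lemma abs_le_linfNorm (U : Matrix (Fin p) (Fin p) ℝ) (i j : Fin p) : |U i j| ≤ linfNorm U :=
  le_ciSup (f := fun ij : Fin p × Fin p => |U ij.1 ij.2|) (Set.finite_range _).bddAbove (i, j)

lemma abs_traceInner_le (U V : Matrix (Fin p) (Fin p) ℝ) :
    |traceInner U V| ≤ linfNorm U * l1Norm V := by
  rw [traceInner_eq_sum, l1Norm, Finset.mul_sum]
  refine (Finset.abs_sum_le_sum_abs _ _).trans (Finset.sum_le_sum fun i _ => ?_)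
  rw [Finset.mul_sum]
  refine (Finset.abs_sum_le_sum_abs _ _).trans (Finset.sum_le_sum fun j _ => ?_)
  rw [abs_mul]
  exact mul_le_mul_of_nonneg_right (abs_le_linfNorm U i j) (abs_nonneg _)

-- The pairing is the sum of the entries of the Hadamard product `P ⊙ Q`, which is positive
-- semidefinite by the Schur product theorem.
lemma traceInner_nonneg_of_posSemidef {P Q : Matrix (Fin p) (Fin p) ℝ} (hP : P.PosSemidef)
    (hQ : Q.PosSemidef) : 0 ≤ traceInner P Q := by
  simpa [traceInner_eq_sum, dotProduct, mulVec, Finset.mul_sum] using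
    (hP.hadamard hQ).dotProduct_mulVec_nonneg (fun _ => 1)

lemma traceInner_inv_sub_inv_nonneg {A B : Matrix (Fin p) (Fin p) ℝ} (hA : A.PosDef)
    (hB : B.PosDef) : 0 ≤ traceInner (A⁻¹ - B⁻¹) (B - A) := by
  set M := B - A
  have hM : Mᵀ = M := transpose_eq_self_of_isHermitian (hB.isHermitian.sub hA.isHermitian)
  have hQ : (Mᵀ * B⁻¹ * M).PosSemidef := by
    simpa [conjTranspose_eq_transpose_of_trivial] using
      hB.inv.posSemidef.conjTranspose_mul_mul_same M
  have hfac : A⁻¹ - B⁻¹ = A⁻¹ * M * B⁻¹ := by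
    rw [Matrix.mul_sub, Matrix.sub_mul, Matrix.mul_assoc,
      mul_nonsing_inv _ ((isUnit_iff_isUnit_det _).1 hB.isUnit),
      nonsing_inv_mul _ ((isUnit_iff_isUnit_det _).1 hA.isUnit), Matrix.mul_one, Matrix.one_mul]
  have hQt := transpose_eq_self_of_isHermitian hQ.isHermitian
  calc 0 ≤ traceInner A⁻¹ (Mᵀ * B⁻¹ * M) :=
        traceInner_nonneg_of_posSemidef hA.inv.posSemidef hQ
    _ = traceInner (A⁻¹ - B⁻¹) M := by
      rw [traceInner, hQt, hfac, traceInner, hM]; simp only [Matrix.mul_assoc]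

lemma frobNorm_smul (c : ℝ) (U : Matrix (Fin p) (Fin p) ℝ) :
    frobNorm (c • U) = |c| * frobNorm U := by
  have hsum : ∑ i, ∑ j, ((c • U) i j) ^ 2 = c ^ 2 * ∑ i, ∑ j, (U i j) ^ 2 := by
    simp only [Matrix.smul_apply, smul_eq_mul, Finset.mul_sum, mul_pow]
  rw [frobNorm, frobNorm, hsum, Real.sqrt_mul (sq_nonneg c), Real.sqrt_sq_eq_abs]

lemma l1Norm_nonneg (U : Matrix (Fin p) (Fin p) ℝ) : 0 ≤ l1Norm U :=
  Finset.sum_nonneg fun _ _ => Finset.sum_nonneg fun _ _ => abs_nonneg _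

lemma l1Norm_sub_le (U V : Matrix (Fin p) (Fin p) ℝ) : l1Norm (U - V) ≤ l1Norm U + l1Norm V := by
  simp only [l1Norm, ← Finset.sum_add_distrib]
  exact Finset.sum_le_sum fun i _ => Finset.sum_le_sum fun j _ => abs_sub _ _

lemma l1Norm_eq_sum_diag_add_offNorm (U : Matrix (Fin p) (Fin p) ℝ) :
    l1Norm U = ∑ i, |U i i| + offNorm U := by
  rw [l1Norm, offNorm, ← Fintype.sum_prod_type',
    ← Finset.sum_filter_add_sum_filter_not Finset.univ (fun ij : Fin p × Fin p => ij.1 ≠ ij.2),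
    add_comm, Finset.sum_filter, Fintype.sum_prod_type]
  simp

variable (p) in
def offDiagIndex : Finset (Fin p × Fin p) :=
  Finset.univ.filter fun ij => ij.1 ≠ ij.2

noncomputable def offSupport (Θ : Matrix (Fin p) (Fin p) ℝ) : Finset (Fin p × Fin p) :=
  Finset.univ.filter fun ij => ij.1 ≠ ij.2 ∧ Θ ij.1 ij.2 ≠ 0

lemma offSupport_subset (Θ : Matrix (Fin p) (Fin p) ℝ) : offSupport Θ ⊆ offDiagIndex p :=
  Finset.monotone_filter_right _ fun _ _ h => h.1

lemma eq_zero_of_mem_offDiagIndex_sdiff {Θ : Matrix (Fin p) (Fin p) ℝ} {ij : Fin p × Fin p}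
    (h : ij ∈ offDiagIndex p \ offSupport Θ) : Θ ij.1 ij.2 = 0 := by
  simp only [offDiagIndex, offSupport, Finset.mem_sdiff, Finset.mem_filter, Finset.mem_univ,
    true_and] at h
  tauto

lemma offNorm_eq_sum_offSupport_add (Θ U : Matrix (Fin p) (Fin p) ℝ) :
    offNorm U = ∑ ij ∈ offSupport Θ, |U ij.1 ij.2|
      + ∑ ij ∈ offDiagIndex p \ offSupport Θ, |U ij.1 ij.2| := by
  rw [add_comm, Finset.sum_sdiff (offSupport_subset Θ)]
  rfl

lemma offNorm_sub_offNorm_le (Θ Θ' : Matrix (Fin p) (Fin p) ℝ) :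
    offNorm Θ - offNorm Θ' ≤ ∑ ij ∈ offSupport Θ, |(Θ' - Θ) ij.1 ij.2|
      - ∑ ij ∈ offDiagIndex p \ offSupport Θ, |(Θ' - Θ) ij.1 ij.2| := by
  have hzero : ∑ ij ∈ offDiagIndex p \ offSupport Θ, |Θ ij.1 ij.2| = 0 :=
    Finset.sum_eq_zero fun ij hij => by rw [eq_zero_of_mem_offDiagIndex_sdiff hij, abs_zero]
  have hcompl : ∑ ij ∈ offDiagIndex p \ offSupport Θ, |Θ' ij.1 ij.2|
      = ∑ ij ∈ offDiagIndex p \ offSupport Θ, |(Θ' - Θ) ij.1 ij.2| :=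
    Finset.sum_congr rfl fun ij hij => by
      rw [Matrix.sub_apply, eq_zero_of_mem_offDiagIndex_sdiff hij, sub_zero]
  have hsupp : ∑ ij ∈ offSupport Θ, |Θ ij.1 ij.2| - ∑ ij ∈ offSupport Θ, |Θ' ij.1 ij.2|
      ≤ ∑ ij ∈ offSupport Θ, |(Θ' - Θ) ij.1 ij.2| := by
    rw [← Finset.sum_sub_distrib]
    exact Finset.sum_le_sum fun ij _ => by
      simpa only [Matrix.sub_apply, abs_sub_comm] using
        abs_sub_abs_le_abs_sub (Θ ij.1 ij.2) (Θ' ij.1 ij.2)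
  rw [offNorm_eq_sum_offSupport_add Θ Θ, offNorm_eq_sum_offSupport_add Θ Θ']
  linarith

noncomputable def masterBound (Θ Δ : Matrix (Fin p) (Fin p) ℝ) (lam τ₁ : ℝ) : ℝ :=
  (3 * lam / 2) * (∑ ij ∈ offSupport Θ, |Δ ij.1 ij.2|) + (lam / 2) * (∑ i, |Δ i i|)
    - (lam / 2) * (∑ ij ∈ offDiagIndex p \ offSupport Θ, |Δ ij.1 ij.2|) + τ₁ * frobNorm Δ

lemma masterBound_le_l1Norm (Θ Δ : Matrix (Fin p) (Fin p) ℝ) {lam : ℝ} (hlam : 0 ≤ lam)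
    (τ₁ : ℝ) :
    masterBound Θ Δ lam τ₁ ≤ 3 * lam / 2 * l1Norm Δ + τ₁ * frobNorm Δ := by
  have hdiag : 0 ≤ ∑ i, |Δ i i| := Finset.sum_nonneg fun _ _ => abs_nonneg _
  have hcompl : 0 ≤ ∑ ij ∈ offDiagIndex p \ offSupport Θ, |Δ ij.1 ij.2| :=
    Finset.sum_nonneg fun _ _ => abs_nonneg _
  rw [masterBound, l1Norm_eq_sum_diag_add_offNorm, offNorm_eq_sum_offSupport_add Θ]
  nlinarith [mul_nonneg hlam hdiag, mul_nonneg hlam hcompl]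

def RestrictedStrongConvexity (Θ : Matrix (Fin p) (Fin p) ℝ) (κ : ℝ) : Prop :=
  ∀ Δ : Matrix (Fin p) (Fin p) ℝ, Δ.IsSymm → (Θ + Δ).PosDef → frobNorm Δ ≤ 1 →
    traceInner (Θ⁻¹ - (Θ + Δ)⁻¹) Δ ≥ κ * (frobNorm Δ) ^ 2

namespace RestrictedStrongConvexity

variable {Θ Θ' : Matrix (Fin p) (Fin p) ℝ} {κ : ℝ}

lemma mul_frobNorm_le_of_one_lt (hrsc : RestrictedStrongConvexity Θ κ) (hΘ : Θ.PosDef)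
    (hΘ' : Θ'.PosDef) (hF : 1 < frobNorm (Θ' - Θ)) :
    κ * frobNorm (Θ' - Θ) ≤ traceInner (Θ⁻¹ - Θ'⁻¹) (Θ' - Θ) := by
  set Δ := Θ' - Θ
  set F := frobNorm Δ
  set t := F⁻¹
  have ht0 : 0 < t := by positivity
  have ht1 : t < 1 := inv_lt_one_of_one_lt₀ hF
  have htF : t * F = 1 := inv_mul_cancel₀ (by positivity)
  have hmid : (Θ + t • Δ).PosDef := by
    rw [show Θ + t • Δ = (1 - t) • Θ + t • Θ' by
      simp only [Δ, smul_sub, sub_smul, one_smul]; abel]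
    exact (hΘ.smul (sub_pos.2 ht1)).add (hΘ'.smul ht0)
  have hΔ : Δ.IsSymm := transpose_eq_self_of_isHermitian (hΘ'.isHermitian.sub hΘ.isHermitian)
  have hunit : frobNorm (t • Δ) = 1 := by rw [frobNorm_smul, abs_of_pos ht0, htF]
  have hnear : κ * F ≤ traceInner (Θ⁻¹ - (Θ + t • Δ)⁻¹) Δ := by
    have h := hrsc (t • Δ) (hΔ.smul t) hmid hunit.le
    rw [hunit, traceInner_smul_right] at h
    calc κ * F = F * (κ * 1 ^ 2) := by ring
      _ ≤ F * (t * traceInner (Θ⁻¹ - (Θ + t • Δ)⁻¹) Δ) := by gcongr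
      _ = traceInner (Θ⁻¹ - (Θ + t • Δ)⁻¹) Δ := by rw [← mul_assoc, mul_comm F t, htF, one_mul]
  have hfar : 0 ≤ traceInner ((Θ + t • Δ)⁻¹ - Θ'⁻¹) Δ := by
    have h := traceInner_inv_sub_inv_nonneg hmid hΘ'
    rwa [show Θ' - (Θ + t • Δ) = (1 - t) • Δ by
        simp only [Δ, smul_sub, sub_smul, one_smul]; abel,
      traceInner_smul_right, mul_nonneg_iff_of_pos_left (sub_pos.2 ht1)] at h
  calc κ * F
      ≤ traceInner (Θ⁻¹ - (Θ + t • Δ)⁻¹) Δ + traceInner ((Θ + t • Δ)⁻¹ - Θ'⁻¹) Δ := by linarith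
    _ = traceInner (Θ⁻¹ - Θ'⁻¹) Δ := by rw [← traceInner_add_left, sub_add_sub_cancel]

lemma frobNorm_le_one (hrsc : RestrictedStrongConvexity Θ κ) (hΘ : Θ.PosDef) (hΘ' : Θ'.PosDef)
    {τ₁ : ℝ} (hτ₁ : τ₁ < κ)
    (h : traceInner (Θ⁻¹ - Θ'⁻¹) (Θ' - Θ) ≤ κ - τ₁ + τ₁ * frobNorm (Θ' - Θ)) :
    frobNorm (Θ' - Θ) ≤ 1 := by
  by_contra! hF
  have := hrsc.mul_frobNorm_le_of_one_lt hΘ hΘ' hF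
  nlinarith [mul_pos (sub_pos.2 hτ₁) (sub_pos.2 hF)]

end RestrictedStrongConvexity

lemma traceInner_inv_sub_inv_le_masterBound {Θ Θ' S S' : Matrix (Fin p) (Fin p) ℝ}
    {lam τ₁ τ₂ : ℝ} (hlam : 0 ≤ lam)
    (hstat : traceInner (S' - Θ'⁻¹) (Θ' - Θ) ≤ lam * (offNorm Θ - offNorm Θ'))
    (hinc : |traceInner (S' - S) (Θ' - Θ)| ≤ τ₁ * frobNorm (Θ' - Θ) + τ₂ * l1Norm (Θ' - Θ))
    (hreg : 4 * max (linfNorm (S - Θ⁻¹)) τ₂ ≤ lam) :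
    traceInner (Θ⁻¹ - Θ'⁻¹) (Θ' - Θ) ≤ masterBound Θ (Θ' - Θ) lam τ₁ := by
  set Δ := Θ' - Θ
  have hL1 := l1Norm_nonneg Δ
  have hdev : |traceInner (S - Θ⁻¹) Δ| ≤ lam / 4 * l1Norm Δ :=
    (abs_traceInner_le _ _).trans
      (mul_le_mul_of_nonneg_right (by linarith [le_max_left (linfNorm (S - Θ⁻¹)) τ₂]) hL1)
  have hτ₂ : τ₂ * l1Norm Δ ≤ lam / 4 * l1Norm Δ :=
    mul_le_mul_of_nonneg_right (by linarith [le_max_right (linfNorm (S - Θ⁻¹)) τ₂]) hL1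
  have hoff := mul_le_mul_of_nonneg_left (offNorm_sub_offNorm_le Θ Θ') hlam
  have hsplit : traceInner (Θ⁻¹ - Θ'⁻¹) Δ = traceInner (S' - Θ'⁻¹) Δ
      - traceInner (S' - S) Δ - traceInner (S - Θ⁻¹) Δ := by
    rw [← traceInner_sub_left, ← traceInner_sub_left]
    congr 1
    abel
  have hbound : traceInner (Θ⁻¹ - Θ'⁻¹) Δ ≤ lam * ((∑ ij ∈ offSupport Θ, |Δ ij.1 ij.2|)
      - ∑ ij ∈ offDiagIndex p \ offSupport Θ, |Δ ij.1 ij.2|) + τ₁ * frobNorm Δ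
      + lam / 2 * l1Norm Δ := by
    linarith [abs_le.1 hinc, abs_le.1 hdev]
  refine hbound.trans_eq ?_
  rw [masterBound, l1Norm_eq_sum_diag_add_offNorm, offNorm_eq_sum_offSupport_add Θ]
  ring

end

theorem master_inequality_general
    (p n h : ℕ)
    (x : Fin n → Fin p → ℝ)
    (Θstar Θtil : Matrix (Fin p) (Fin p) ℝ)
    (hΘstar : Θstar.PosDef) (hΘtil : Θtil.PosDef)
    (R : ℝ) (hR : 0 < R) (hΘstarR : l1Norm Θstar ≤ R) (hΘtilR : l1Norm Θtil ≤ R)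
    (wtil wstar : Fin n → ℝ)
    (κ τ₁ τ₂ lam : ℝ) (hlam : 0 < lam)
    (H1 : traceInner
        ((1 / (h : ℝ)) • ∑ i, wtil i • Matrix.vecMulVec (x i) (x i) - Θtil⁻¹)
        (Θtil - Θstar) ≤ lam * (offNorm Θstar - offNorm Θtil))
    (H2 : ∀ Δ : Matrix (Fin p) (Fin p) ℝ, Δ.IsSymm → (Θstar + Δ).PosDef →
        frobNorm Δ ≤ 1 →
        traceInner (Θstar⁻¹ - (Θstar + Δ)⁻¹) Δ ≥ κ * (frobNorm Δ) ^ 2)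
    (H3 : |traceInner
        ((1 / (h : ℝ)) • ∑ i, (wtil i - wstar i) • Matrix.vecMulVec (x i) (x i))
        (Θtil - Θstar)|
        ≤ τ₁ * frobNorm (Θtil - Θstar) + τ₂ * l1Norm (Θtil - Θstar))
    (H4a : 4 * max
        (linfNorm ((1 / (h : ℝ)) • ∑ i, wstar i • Matrix.vecMulVec (x i) (x i) - Θstar⁻¹))
        τ₂ ≤ lam)
    (H4b : lam ≤ (κ - τ₁) / (3 * R)) :
    κ * (frobNorm (Θtil - Θstar)) ^ 2 ≤
      (3 * lam / 2) * (∑ ij ∈ Finset.univ.filter (fun ij : Fin p × Fin p => ij.1 ≠ ij.2 ∧ Θstar ij.1 ij.2 ≠ 0),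
          |(Θtil - Θstar) ij.1 ij.2|)
        + (lam / 2) * (∑ i, |(Θtil - Θstar) i i|)
        - (lam / 2) * (∑ ij ∈ (Finset.univ.filter (fun ij : Fin p × Fin p => ij.1 ≠ ij.2)) \
            (Finset.univ.filter (fun ij : Fin p × Fin p => ij.1 ≠ ij.2 ∧ Θstar ij.1 ij.2 ≠ 0)),
            |(Θtil - Θstar) ij.1 ij.2|)
        + τ₁ * frobNorm (Θtil - Θstar) := by
  have hrsc : RestrictedStrongConvexity Θstar κ := H2
  simp only [sub_smul, Finset.sum_sub_distrib, smul_sub] at H3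
  have hbasic := traceInner_inv_sub_inv_le_masterBound hlam.le H1 H3 H4a
  have h3R : lam * (3 * R) ≤ κ - τ₁ := (le_div_iff₀ (by positivity)).1 H4b
  have hl1 : l1Norm (Θtil - Θstar) ≤ 2 * R := by linarith [l1Norm_sub_le Θtil Θstar]
  have hF : frobNorm (Θtil - Θstar) ≤ 1 := by
    have hτ₁ : τ₁ < κ := by linarith [mul_pos hlam hR]
    refine hrsc.frobNorm_le_one hΘstar hΘtil hτ₁
      (hbasic.trans ((masterBound_le_l1Norm _ _ hlam.le τ₁).trans ?_))
    linarith [mul_le_mul_of_nonneg_left hl1 hlam.le]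
  have hsymm : (Θtil - Θstar).IsSymm :=
    transpose_eq_self_of_isHermitian (hΘtil.isHermitian.sub hΘstar.isHermitian)
  calc κ * frobNorm (Θtil - Θstar) ^ 2
      ≤ traceInner (Θstar⁻¹ - Θtil⁻¹) (Θtil - Θstar) := by
        simpa using hrsc _ hsymm (by simpa using hΘtil) hF
    _ ≤ masterBound Θstar (Θtil - Θstar) lam τ₁ := hbasic

/-- Display (17) in the proof of Theorem 1: the master inequality. -/
theorem master_inequality
    (p n h : ℕ) (hp : 0 < p) (hn : 0 < n) (hh : 0 < h)
    (x : Fin n → Fin p → ℝ)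
    (Θstar Θtil : Matrix (Fin p) (Fin p) ℝ)
    (hΘstar : Θstar.PosDef) (hΘtil : Θtil.PosDef)
    (R : ℝ) (hR : 0 < R) (hΘstarR : l1Norm Θstar ≤ R) (hΘtilR : l1Norm Θtil ≤ R)
    (wtil wstar : Fin n → ℝ)
    (hwtil : ∀ i, wtil i ∈ Set.Icc (0 : ℝ) 1) (hwstar : ∀ i, wstar i ∈ Set.Icc (0 : ℝ) 1)
    (κ τ₁ τ₂ lam : ℝ) (hκ : 0 < κ) (hτ₁ : 0 ≤ τ₁) (hτ₂ : 0 ≤ τ₂) (hlam : 0 < lam)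
    (H1 : traceInner
        ((1 / (h : ℝ)) • ∑ i, wtil i • Matrix.vecMulVec (x i) (x i) - Θtil⁻¹)
        (Θtil - Θstar) ≤ lam * (offNorm Θstar - offNorm Θtil))
    (H2 : ∀ Δ : Matrix (Fin p) (Fin p) ℝ, Δ.IsSymm → (Θstar + Δ).PosDef →
        frobNorm Δ ≤ 1 →
        traceInner (Θstar⁻¹ - (Θstar + Δ)⁻¹) Δ ≥ κ * (frobNorm Δ) ^ 2)
    (H3 : |traceInner
        ((1 / (h : ℝ)) • ∑ i, (wtil i - wstar i) • Matrix.vecMulVec (x i) (x i))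
        (Θtil - Θstar)|
        ≤ τ₁ * frobNorm (Θtil - Θstar) + τ₂ * l1Norm (Θtil - Θstar))
    (H4a : 4 * max
        (linfNorm ((1 / (h : ℝ)) • ∑ i, wstar i • Matrix.vecMulVec (x i) (x i) - Θstar⁻¹))
        τ₂ ≤ lam)
    (H4b : lam ≤ (κ - τ₁) / (3 * R))
    (k : ℕ)
    (hk : (Finset.univ.filter
        (fun ij : Fin p × Fin p => ij.1 ≠ ij.2 ∧ Θstar ij.1 ij.2 ≠ 0)).card ≤ k) :
    κ * (frobNorm (Θtil - Θstar)) ^ 2 ≤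
      (3 * lam / 2) * (∑ ij ∈ Finset.univ.filter (fun ij : Fin p × Fin p => ij.1 ≠ ij.2 ∧ Θstar ij.1 ij.2 ≠ 0),
          |(Θtil - Θstar) ij.1 ij.2|)
        + (lam / 2) * (∑ i, |(Θtil - Θstar) i i|)
        - (lam / 2) * (∑ ij ∈ (Finset.univ.filter (fun ij : Fin p × Fin p => ij.1 ≠ ij.2)) \
            (Finset.univ.filter (fun ij : Fin p × Fin p => ij.1 ≠ ij.2 ∧ Θstar ij.1 ij.2 ≠ 0)),
            |(Θtil - Θstar) ij.1 ij.2|)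
        + τ₁ * frobNorm (Θtil - Θstar) :=
  master_inequality_general p n h x Θstar Θtil hΘstar hΘtil R hR hΘstarR hΘtilR wtil wstar κ τ₁ τ₂
    lam hlam H1 H2 H3 H4a H4b
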